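/- arXiv:1410.5602 — 2 statements merged into one kernel-verified Lean document; each statement's English description precedes it below -/
import Mathlib

section
/- Let Π be a finite type and f : Π → ℕ. Assume that for every integer i ≥ 1 the number of elements π ∈ Π with f(π) > i is at most the number of elements with f(π) = i. Then for every integer i ≥ 1 one has 2^(i−1) · |{π ∈ Π : f(π) = i}| ≤ |{π ∈ Π : f(π) ≥ 1}|; in particular, if {π : f(π) ≥ 1} is nonempty, the probability that a uniformly random element π of {π : f(π) ≥ 1} satisfies f(π) = i is at most 1/2^(i−1). -/
/-!
Write `A i` for the number of `π` with `f π ≥ i`. Then `A i = #{f = i} + A (i + 1)`, and the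
hypothesis `A (i + 1) ≤ #{f = i}` says exactly that `2 A (i + 1) ≤ A i`. So `A` at least halves
at every step from `1` on, whence `2^(i-1) #{f = i} ≤ 2^(i-1) A i ≤ A 1`.
-/

open Finset

theorem Nat.two_pow_mul_le_of_two_mul_succ_le {a : ℕ → ℕ} (ha : ∀ n, 2 * a (n + 1) ≤ a n)
    (n : ℕ) : 2 ^ n * a n ≤ a 0 := by
  induction n with
  | zero => simp
  | succ n ih =>
    calc 2 ^ (n + 1) * a (n + 1) = 2 ^ n * (2 * a (n + 1)) := by ring
      _ ≤ 2 ^ n * a n := Nat.mul_le_mul_left _ (ha n)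
      _ ≤ a 0 := ih

section Levels

variable {P : Type*} [Fintype P] (f : P → ℕ)

theorem card_le_eq_card_eq_add_card_lt (i : ℕ) :
    #{π | i ≤ f π} = #{π | f π = i} + #{π | i < f π} := by
  classical
  rw [← card_union_of_disjoint (disjoint_filter.2 fun π _ h => by omega)]
  congr 1
  ext π
  simp only [mem_filter, mem_union, mem_univ, true_and]
  omega

theorem two_mul_card_lt_le_card_le {i : ℕ} (h : #{π | i < f π} ≤ #{π | f π = i}) :
    2 * #{π | i < f π} ≤ #{π | i ≤ f π} := by
  rw [card_le_eq_card_eq_add_card_lt]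
  omega

theorem two_pow_mul_card_eq_succ_le_card_one_le
    (h : ∀ i, 1 ≤ i → #{π | i < f π} ≤ #{π | f π = i}) (n : ℕ) :
    2 ^ n * #{π | f π = n + 1} ≤ #{π | 1 ≤ f π} := by
  have halving : ∀ k, 2 * #{π | k + 2 ≤ f π} ≤ #{π | k + 1 ≤ f π} := fun k =>
    two_mul_card_lt_le_card_le f (h (k + 1) k.succ_pos)
  calc 2 ^ n * #{π | f π = n + 1} ≤ 2 ^ n * #{π | n + 1 ≤ f π} :=
        Nat.mul_le_mul_left _ (card_le_card fun π => by simp +contextual)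
    _ ≤ #{π | 0 + 1 ≤ f π} :=
        Nat.two_pow_mul_le_of_two_mul_succ_le (a := fun k => #{π | k + 1 ≤ f π}) halving n
    _ = #{π | 1 ≤ f π} := by rw [zero_add]

end Levels

theorem div_le_one_div_of_mul_le {a b c : ℕ} (hb : 0 < b) (hc : 0 < c) (h : c * a ≤ b) :
    (a : ℝ) / b ≤ 1 / c := by
  rw [div_le_div_iff₀ (by exact_mod_cast hb) (by exact_mod_cast hc), one_mul]
  exact_mod_cast (mul_comm a c ▸ h)

/-- If for every `i ≥ 1` the number of elements with `f π > i` is at most the number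
with `f π = i`, then for every `i ≥ 1`,
`2^(i-1) · |{π : f π = i}| ≤ |{π : f π ≥ 1}|`; in particular, if `{π : f π ≥ 1}` is
nonempty, a uniformly random element of it satisfies `f π = i` with probability at
most `1/2^(i-1)`. -/
theorem stmt_2 {P : Type*} [Fintype P] (f : P → ℕ)
    (h : ∀ i : ℕ, 1 ≤ i →
      (Finset.univ.filter (fun π => i < f π)).card ≤
        (Finset.univ.filter (fun π => f π = i)).card) :
    ∀ i : ℕ, 1 ≤ i →
      (2 ^ (i - 1) * (Finset.univ.filter (fun π => f π = i)).card ≤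
        (Finset.univ.filter (fun π => 1 ≤ f π)).card) ∧
      ((Finset.univ.filter (fun π => 1 ≤ f π)).Nonempty →
        ((Finset.univ.filter (fun π => f π = i)).card : ℝ) /
            ((Finset.univ.filter (fun π => 1 ≤ f π)).card : ℝ) ≤
          1 / 2 ^ (i - 1)) := by
  intro i hi
  obtain ⟨n, rfl⟩ := Nat.exists_eq_add_of_le' hi
  have key := two_pow_mul_card_eq_succ_le_card_one_le f h n
  rw [Nat.add_sub_cancel]
  refine ⟨key, fun hne => ?_⟩
  exact_mod_cast div_le_one_div_of_mul_le hne.card_pos (by positivity) key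
end

section
/- Let Π be a finite type and f : Π → ℕ. Assume that for every integer i ≥ 1 the number of elements π ∈ Π with f(π) > i is at most the number of elements with f(π) = i. Then the sum of f(π) over all π ∈ Π with f(π) ≥ 1 is at most 4 · |{π ∈ Π : f(π) ≥ 1}|; in particular, if {π : f(π) ≥ 1} is nonempty, the expected value of f over a uniformly random element of {π : f(π) ≥ 1} is at most 4. -/
open Finset

/-- If for every `i ≥ 1` the number of elements with `f π > i` is at most the number
with `f π = i`, then `Σ_{f π ≥ 1} f π ≤ 4 · |{π : f π ≥ 1}|`; in particular, if
`{π : f π ≥ 1}` is nonempty, the average of `f` over it is at most `4`. -/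
theorem stmt_3 {P : Type*} [Fintype P] (f : P → ℕ)
    (h : ∀ i : ℕ, 1 ≤ i →
      (Finset.univ.filter (fun π => i < f π)).card ≤
        (Finset.univ.filter (fun π => f π = i)).card) :
    (∑ π ∈ Finset.univ.filter (fun π => 1 ≤ f π), f π ≤
        4 * (Finset.univ.filter (fun π => 1 ≤ f π)).card) ∧
    ((Finset.univ.filter (fun π => 1 ≤ f π)).Nonempty →
      ((∑ π ∈ Finset.univ.filter (fun π => 1 ≤ f π), (f π : ℝ)) /
          ((Finset.univ.filter (fun π => 1 ≤ f π)).card : ℝ)) ≤ 4) := by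
  classical
  set S := Finset.univ.filter (fun π => 1 ≤ f π) with hS
  set G : ℕ → ℕ := fun i => (Finset.univ.filter (fun π => i < f π)).card with hGdef
  have hG0 : G 0 = S.card := rfl
  have hstep : ∀ i, 2 * G (i + 1) ≤ G i := by
    intro i
    have hsplit : G i = (Finset.univ.filter (fun π => f π = i + 1)).card + G (i + 1) := by
      simp only [hGdef]
      rw [← card_union_of_disjoint]
      · congr 1; ext π; simp; omega
      · rw [disjoint_left]; intro π hπ hπ'; simp at hπ hπ'; omega
    have := h (i + 1) (by omega)
    have hGi : G (i + 1) = (Finset.univ.filter (fun π => i + 1 < f π)).card := rfl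
    omega
  have hkey : ∀ M, (∑ i ∈ range M, G i) + 2 * G M ≤ 2 * G 0 := by
    intro M
    induction M with
    | zero => simp
    | succ n ih =>
      rw [sum_range_succ]
      have := hstep n
      omega
  obtain ⟨M, hM⟩ : ∃ M, ∀ π : P, f π ≤ M :=
    ⟨Finset.univ.sup f, fun π => Finset.le_sup (mem_univ π)⟩
  have hsum : ∑ π ∈ S, f π = ∑ i ∈ range M, G i := by
    have h1 : ∑ π ∈ S, f π = ∑ π : P, f π := by
      apply sum_subset (subset_univ S)
      intro π _ hπ
      simp [hS] at hπ
      omega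
    have h2 : ∀ π : P, f π = ∑ i ∈ range M, if i < f π then 1 else 0 := by
      intro π
      rw [← Finset.sum_filter]
      simp only [sum_const, smul_eq_mul, mul_one]
      have : (range M).filter (fun i => i < f π) = range (f π) := by
        ext i; simp; have := hM π; omega
      rw [this, card_range]
    rw [h1]
    calc ∑ π : P, f π = ∑ π : P, ∑ i ∈ range M, if i < f π then 1 else 0 := by
          exact Finset.sum_congr rfl fun π _ => h2 π
      _ = ∑ i ∈ range M, ∑ π : P, if i < f π then 1 else 0 := Finset.sum_comm
      _ = ∑ i ∈ range M, G i := by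
          apply Finset.sum_congr rfl
          intro i _
          simp [hGdef, Finset.sum_boole]
  have hmain : ∑ π ∈ S, f π ≤ 4 * S.card := by
    have := hkey M
    rw [hsum]
    omega
  refine ⟨hmain, fun hne => ?_⟩
  have hcard : (0 : ℝ) < (S.card : ℝ) := by
    exact_mod_cast Finset.card_pos.mpr hne
  rw [div_le_iff₀ hcard]
  have : ((∑ π ∈ S, f π : ℕ) : ℝ) ≤ ((4 * S.card : ℕ) : ℝ) := by exact_mod_cast hmain
  push_cast at this
  linarith
end
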